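/- On H^{(γ₁,c₁)} ⊗ H^{(γ₂,c₂)}, the vector u = q^{γ₂/2}[γ₁]_q^{1/2} · h₀ ⊗ h₁ − q^{−γ₁/2}[γ₂]_q^{1/2} · h₁ ⊗ h₀ satisfies Δa⁻ u = 0 and Δε u = (c₁ + c₂ + 1) u; moreover the intersection of ker(Δa⁻) with the span of {h₀ ⊗ h₁, h₁ ⊗ h₀} is exactly the one-dimensional subspace spanned by u. -/
import Mathlib


noncomputable section
noncomputable section

/-- The `q`-number `[γ]_q = (q^γ - q^(-γ))/(q - q⁻¹)`. -/
def qnum (q γ : ℝ) : ℝ := (q ^ γ - q ^ (-γ)) / (q - q⁻¹)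

/-- The representation space `H^{(γ,c)}`: finitely supported functions `ℕ → ℂ`. -/
abbrev HO : Type := ℕ →₀ ℂ

/-- The basis vector `h_m`. -/
def hv (m : ℕ) : HO := Finsupp.single m 1

/-- The lowering operator `a⁻ h_m = [γ]_q^{1/2} m^{1/2} h_{m-1}` (so `a⁻ h_0 = 0`). -/
def aMinus (q γ : ℝ) : HO →ₗ[ℂ] HO :=
  Finsupp.lift HO ℂ ℕ fun m => ((Real.sqrt (qnum q γ) * Real.sqrt m : ℝ) : ℂ) • hv (m - 1)

/-- The raising operator `a⁺ h_m = [γ]_q^{1/2} (m+1)^{1/2} h_{m+1}`. -/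
def aPlus (q γ : ℝ) : HO →ₗ[ℂ] HO :=
  Finsupp.lift HO ℂ ℕ fun m => ((Real.sqrt (qnum q γ) * Real.sqrt (m + 1) : ℝ) : ℂ) • hv (m + 1)

/-- The operator `ε h_m = (m + c) h_m`. -/
def epsOp (c : ℝ) : HO →ₗ[ℂ] HO :=
  Finsupp.lift HO ℂ ℕ fun m => (((m : ℝ) + c : ℝ) : ℂ) • hv m

open scoped TensorProduct

/-- The coproduct action of `a⁺` on `H^{(γ₁,c₁)} ⊗ H^{(γ₂,c₂)}`:
`Δa⁺ = q^{γ₂/2}(a⁺ ⊗ 1) + q^{−γ₁/2}(1 ⊗ a⁺)`. -/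
def ΔaPlus (q γ₁ γ₂ : ℝ) : HO ⊗[ℂ] HO →ₗ[ℂ] HO ⊗[ℂ] HO :=
  ((q ^ (γ₂ / 2) : ℝ) : ℂ) • (aPlus q γ₁).rTensor HO +
    ((q ^ (-(γ₁ / 2)) : ℝ) : ℂ) • (aPlus q γ₂).lTensor HO

/-- The coproduct action of `a⁻` on `H^{(γ₁,c₁)} ⊗ H^{(γ₂,c₂)}`:
`Δa⁻ = q^{γ₂/2}(a⁻ ⊗ 1) + q^{−γ₁/2}(1 ⊗ a⁻)`. -/
def ΔaMinus (q γ₁ γ₂ : ℝ) : HO ⊗[ℂ] HO →ₗ[ℂ] HO ⊗[ℂ] HO :=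
  ((q ^ (γ₂ / 2) : ℝ) : ℂ) • (aMinus q γ₁).rTensor HO +
    ((q ^ (-(γ₁ / 2)) : ℝ) : ℂ) • (aMinus q γ₂).lTensor HO

/-- The coproduct action of `ε` on `H^{(γ₁,c₁)} ⊗ H^{(γ₂,c₂)}`: `Δε = ε ⊗ 1 + 1 ⊗ ε`. -/
def Δeps (c₁ c₂ : ℝ) : HO ⊗[ℂ] HO →ₗ[ℂ] HO ⊗[ℂ] HO :=
  (epsOp c₁).rTensor HO + (epsOp c₂).lTensor HO

/-- The matrix coefficient of the braid operator `B_{(γ₁,c₁),(γ₂,c₂)}`. -/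
def bcoef (q γ₁ γ₂ c₁ c₂ : ℝ) (m m' k : ℕ) : ℝ :=
  q ^ (-(((m : ℝ) + c₁) * γ₂ + ((m' : ℝ) + c₂) * γ₁)) *
    Real.sqrt (Nat.choose (m + k - 1) (m - 1)) * Real.sqrt (Nat.choose (m' + k) m') *
    Real.sqrt ((q ^ (-(2 * γ₁)) - 1) * (1 - q ^ (2 * γ₂))) ^ k

/-- The braid operator `B_{(γ₁,c₁),(γ₂,c₂)} : H^{(γ₁,c₁)} ⊗ H^{(γ₂,c₂)} → H^{(γ₂,c₂)} ⊗ H^{(γ₁,c₁)}`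
(the flip composed with the `R`-matrix of `ho_q`), defined on basis vectors by
`B(h_m ⊗ h_{m'}) = q^{−((m+c₁)γ₂+(m'+c₂)γ₁)} Σ_{k=0}^m binom(m+k−1,m−1)^{1/2} binom(m'+k,m')^{1/2}
((q^{−2γ₁}−1)(1−q^{2γ₂}))^{k/2} h_{m'+k} ⊗ h_{m−k}`. -/
def braidOp (q γ₁ γ₂ c₁ c₂ : ℝ) : HO ⊗[ℂ] HO →ₗ[ℂ] HO ⊗[ℂ] HO :=
  TensorProduct.lift <|
    Finsupp.lift (HO →ₗ[ℂ] HO ⊗[ℂ] HO) ℂ ℕ fun m =>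
      Finsupp.lift (HO ⊗[ℂ] HO) ℂ ℕ fun m' =>
        ∑ k ∈ Finset.range (m + 1),
          ((bcoef q γ₁ γ₂ c₁ c₂ m m' k : ℝ) : ℂ) • (hv (m' + k) ⊗ₜ[ℂ] hv (m - k))

/-- The canonical zero of the tensor product (made an instance to help elaboration). -/
noncomputable instance : Zero (HO ⊗[ℂ] HO) := AddMonoid.toZero


lemma aMinus_hv (q γ : ℝ) (m : ℕ) :
    aMinus q γ (hv m) = ((Real.sqrt (qnum q γ) * Real.sqrt m : ℝ) : ℂ) • hv (m - 1) := by
  simp [aMinus, hv, Finsupp.lift_apply, Finsupp.sum_single_index]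

lemma epsOp_hv (c : ℝ) (m : ℕ) : epsOp c (hv m) = (((m : ℝ) + c : ℝ) : ℂ) • hv m := by
  rw [epsOp, Finsupp.lift_apply, hv, Finsupp.sum_single_index (by simp), one_smul]; rfl

lemma aMinus_hv0 (q γ : ℝ) : aMinus q γ (hv 0) = 0 := by
  rw [aMinus_hv]; norm_num

lemma aMinus_hv1 (q γ : ℝ) : aMinus q γ (hv 1) = ((Real.sqrt (qnum q γ) : ℝ) : ℂ) • hv 0 := by
  rw [aMinus_hv]; norm_num

lemma qnum_pos (q γ : ℝ) (hq0 : 0 < q) (hq1 : q < 1) (hγ : 0 < γ) : 0 < qnum q γ := by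
  have h1 : q ^ γ < 1 := Real.rpow_lt_one hq0.le hq1 hγ
  have h2 : 1 < q ^ (-γ) := Real.one_lt_rpow_of_pos_of_lt_one_of_neg hq0 hq1 (by linarith)
  have h3 : 1 < q⁻¹ := by rw [lt_inv_comm₀] <;> simp [hq0, hq1]
  exact div_pos_iff.mpr (Or.inr ⟨by linarith, by linarith⟩)

lemma ΔaMinus_e01 (q γ₁ γ₂ : ℝ) :
    ΔaMinus q γ₁ γ₂ (hv 0 ⊗ₜ[ℂ] hv 1) =
      ((q ^ (-(γ₁ / 2)) * Real.sqrt (qnum q γ₂) : ℝ) : ℂ) • (hv 0 ⊗ₜ[ℂ] hv 0) := by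
  simp only [ΔaMinus, LinearMap.add_apply, LinearMap.smul_apply, LinearMap.rTensor_tmul,
    LinearMap.lTensor_tmul, aMinus_hv0, aMinus_hv1, TensorProduct.zero_tmul,
    TensorProduct.tmul_smul, smul_zero, zero_add, smul_smul, Complex.ofReal_mul]

lemma ΔaMinus_e10 (q γ₁ γ₂ : ℝ) :
    ΔaMinus q γ₁ γ₂ (hv 1 ⊗ₜ[ℂ] hv 0) =
      ((q ^ (γ₂ / 2) * Real.sqrt (qnum q γ₁) : ℝ) : ℂ) • (hv 0 ⊗ₜ[ℂ] hv 0) := by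
  simp only [ΔaMinus, LinearMap.add_apply, LinearMap.smul_apply, LinearMap.rTensor_tmul,
    LinearMap.lTensor_tmul, aMinus_hv0, aMinus_hv1, TensorProduct.tmul_zero,
    TensorProduct.smul_tmul', smul_zero, add_zero, smul_smul, Complex.ofReal_mul]

lemma Δeps_e01 (c₁ c₂ : ℝ) :
    Δeps c₁ c₂ (hv 0 ⊗ₜ[ℂ] hv 1) = ((c₁ + c₂ + 1 : ℝ) : ℂ) • (hv 0 ⊗ₜ[ℂ] hv 1) := by
  simp only [Δeps, LinearMap.add_apply, LinearMap.rTensor_tmul, LinearMap.lTensor_tmul,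
    epsOp_hv, TensorProduct.smul_tmul', TensorProduct.tmul_smul, smul_smul, ← add_smul]
  rw [← TensorProduct.add_tmul, ← add_smul]
  congr 2
  push_cast
  ring

lemma Δeps_e10 (c₁ c₂ : ℝ) :
    Δeps c₁ c₂ (hv 1 ⊗ₜ[ℂ] hv 0) = ((c₁ + c₂ + 1 : ℝ) : ℂ) • (hv 1 ⊗ₜ[ℂ] hv 0) := by
  simp only [Δeps, LinearMap.add_apply, LinearMap.rTensor_tmul, LinearMap.lTensor_tmul,
    epsOp_hv, TensorProduct.smul_tmul', TensorProduct.tmul_smul, smul_smul, ← add_smul]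
  rw [← TensorProduct.add_tmul, ← add_smul]
  congr 2
  push_cast
  ring


/-- Coordinate functional on the tensor product. -/
def coordF (i j : ℕ) : HO ⊗[ℂ] HO →ₗ[ℂ] ℂ :=
  TensorProduct.lift ((LinearMap.mul ℂ ℂ).compl₁₂ (Finsupp.lapply i) (Finsupp.lapply j))

lemma coordF_tmul (i j : ℕ) (x y : HO) : coordF i j (x ⊗ₜ[ℂ] y) = x i * y j := by
  simp [coordF]

/-- on `H^{(γ₁,c₁)} ⊗ H^{(γ₂,c₂)}` the vector
`u = q^{γ₂/2}[γ₁]_q^{1/2} h₀ ⊗ h₁ − q^{−γ₁/2}[γ₂]_q^{1/2} h₁ ⊗ h₀` satisfies `Δa⁻ u = 0` and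
`Δε u = (c₁+c₂+1) u`; moreover `ker(Δa⁻) ∩ span{h₀⊗h₁, h₁⊗h₀}` is exactly the one-dimensional
subspace spanned by `u`. -/
theorem stmt7 (q γ₁ γ₂ c₁ c₂ : ℝ) (hq0 : 0 < q) (hq1 : q < 1)
    (hγ₁ : 0 < γ₁) (hγ₂ : 0 < γ₂) :
    ∀ u : HO ⊗[ℂ] HO,
      u = ((q ^ (γ₂ / 2) * Real.sqrt (qnum q γ₁) : ℝ) : ℂ) • (hv 0 ⊗ₜ[ℂ] hv 1) -
          ((q ^ (-(γ₁ / 2)) * Real.sqrt (qnum q γ₂) : ℝ) : ℂ) • (hv 1 ⊗ₜ[ℂ] hv 0) →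
      ΔaMinus q γ₁ γ₂ u = 0 ∧
      Δeps c₁ c₂ u = ((c₁ + c₂ + 1 : ℝ) : ℂ) • u ∧
      u ≠ 0 ∧
      LinearMap.ker (ΔaMinus q γ₁ γ₂) ⊓
          Submodule.span ℂ {hv 0 ⊗ₜ[ℂ] hv 1, hv 1 ⊗ₜ[ℂ] hv 0} =
        Submodule.span ℂ {u} := by
  intro u hu
  set C1 : ℂ := ((q ^ (γ₂ / 2) * Real.sqrt (qnum q γ₁) : ℝ) : ℂ) with hC1def
  set C2 : ℂ := ((q ^ (-(γ₁ / 2)) * Real.sqrt (qnum q γ₂) : ℝ) : ℂ) with hC2def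
  have hC1 : C1 ≠ 0 := by
    rw [hC1def, Complex.ofReal_ne_zero]
    have h1 := Real.rpow_pos_of_pos hq0 (γ₂ / 2)
    have h2 := Real.sqrt_pos.mpr (qnum_pos q γ₁ hq0 hq1 hγ₁)
    positivity
  have hC2 : C2 ≠ 0 := by
    rw [hC2def, Complex.ofReal_ne_zero]
    have h1 := Real.rpow_pos_of_pos hq0 (-(γ₁ / 2))
    have h2 := Real.sqrt_pos.mpr (qnum_pos q γ₂ hq0 hq1 hγ₂)
    positivity
  have he00 : (hv 0 ⊗ₜ[ℂ] hv 0 : HO ⊗[ℂ] HO) ≠ 0 := by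
    intro h
    have := congrArg (coordF 0 0) h
    simp [coordF_tmul, hv] at this
  have hker : ΔaMinus q γ₁ γ₂ u = 0 := by
    rw [hu, map_sub, map_smul, map_smul, ΔaMinus_e01, ΔaMinus_e10, smul_smul, smul_smul,
      ← hC1def, ← hC2def, mul_comm, sub_self]
  refine ⟨hker, ?_, ?_, ?_⟩
  · rw [hu, map_sub, map_smul, map_smul, Δeps_e01, Δeps_e10, smul_sub]
    module
  · intro h
    rw [hu] at h
    have := congrArg (coordF 0 1) h
    simp only [map_sub, map_smul, coordF_tmul, map_zero, smul_eq_mul] at this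
    apply hC1
    simpa [hv, Finsupp.single_apply] using this
  · apply le_antisymm
    · rintro v ⟨hv1, hv2⟩
      obtain ⟨a, b, rfl⟩ := Submodule.mem_span_pair.mp hv2
      have hk : ΔaMinus q γ₁ γ₂ (a • hv 0 ⊗ₜ[ℂ] hv 1 + b • hv 1 ⊗ₜ[ℂ] hv 0) = 0 :=
        LinearMap.mem_ker.mp hv1
      rw [map_add, map_smul, map_smul, ΔaMinus_e01, ΔaMinus_e10, smul_smul, smul_smul,
        ← hC1def, ← hC2def, ← add_smul, smul_eq_zero] at hk
      have heq : a * C2 + b * C1 = 0 := hk.resolve_right he00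
      refine Submodule.mem_span_singleton.mpr ⟨a / C1, ?_⟩
      have h1 : a / C1 * C1 = a := div_mul_cancel₀ a hC1
      have h2 : a / C1 * C2 = -b := by
        field_simp
        linear_combination heq
      rw [hu, smul_sub, smul_smul, smul_smul, h1, h2]
      module
    · rw [Submodule.span_singleton_le_iff_mem]
      refine ⟨LinearMap.mem_ker.mpr hker, Submodule.mem_span_pair.mpr ⟨C1, -C2, ?_⟩⟩
      rw [hu]
      module
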